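/- If μ and ν are in 𝔸_U, then μˆν is in 𝔸_U. -/

import Mathlib

open scoped Classical

/-- The free binary system (free magma) on one generator. -/
abbrev 𝕋 : Type := FreeMagma Unit

/-- The generator `1` of `𝕋`. -/
def e1 : 𝕋 := FreeMagma.of ()

/-- `#(t)`: the number of occurrences of the generator in `t`. -/
def cnt : 𝕋 → ℕ
  | FreeMagma.of _ => 1
  | FreeMagma.mul a b => cnt a + cnt b

/-- The space `ℓ^∞(S)` of bounded real-valued functions on `S`. -/
def Bdd (S : Type*) : Type _ := {f : S → ℝ // ∃ M, ∀ s, |f s| ≤ M}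

/-- Package a function as an element of `Bdd S` (junk value if unbounded). -/
noncomputable def liftBdd {S : Type*} (g : S → ℝ) : Bdd S :=
  if h : ∃ M, ∀ s, |g s| ≤ M then ⟨g, h⟩ else ⟨fun _ => 0, 0, fun _ => by simp⟩

/-- The constant function as an element of `Bdd S`. -/
def constB (S : Type*) (c : ℝ) : Bdd S := ⟨fun _ => c, |c|, fun _ => le_rfl⟩

/-- The characteristic function of `E` as an element of `Bdd S`. -/
noncomputable def indB {S : Type*} (E : Set S) : Bdd S :=
  liftBdd (fun s => if s ∈ E then 1 else 0)

/-- `Pr S`: finitely additive probability measures on `S`, identified with the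
positive normalized linear functionals on `ℓ^∞(S)`.  The weak* topology is the
subspace topology inherited from the product topology on `Bdd S → ℝ`. -/
def PrSet (S : Type*) : Set (Bdd S → ℝ) :=
  {φ | (∀ f g h : Bdd S, (∀ s, h.1 s = f.1 s + g.1 s) → φ h = φ f + φ g) ∧
       (∀ (c : ℝ) (f g : Bdd S), (∀ s, g.1 s = c * f.1 s) → φ g = c * φ f) ∧
       (∀ f : Bdd S, (∀ s, 0 ≤ f.1 s) → 0 ≤ φ f) ∧
       φ (constB S 1) = 1}

/-- `μ(E)`: the measure of a set `E ⊆ S`. -/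
noncomputable def mE {S : Type*} (φ : Bdd S → ℝ) (E : Set S) : ℝ := φ (indB E)

/-- The product `μ ⊗ ν` of finitely additive measures:
`μ⊗ν(f) = μ(x ↦ ν(y ↦ f(x,y)))`. -/
noncomputable def prodM {S T : Type*} (φ : Bdd S → ℝ) (ψ : Bdd T → ℝ) :
    Bdd (S × T) → ℝ :=
  fun f => φ (liftBdd fun x => ψ (liftBdd fun y => f.1 (x, y)))

/-- The extension of a binary operation `op` on `S` to `Pr S`:
`μ⋆ν(f) = μ(x ↦ ν(y ↦ f(x ⋆ y)))`. -/
noncomputable def starM {S : Type*} (op : S → S → S) (φ ψ : Bdd S → ℝ) :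
    Bdd S → ℝ :=
  fun f => φ (liftBdd fun x => ψ (liftBdd fun y => f.1 (op x y)))

/-- The extension of `ˆ` to `Pr 𝕋`. -/
noncomputable def hmul (φ ψ : Bdd 𝕋 → ℝ) : Bdd 𝕋 → ℝ := starM (· * ·) φ ψ

/-- Finitely supported probability measures: finite convex combinations of
point evaluations. -/
def FinSuppPr (S : Type*) : Set (Bdd S → ℝ) :=
  {φ | ∃ (F : Finset S) (w : S → ℝ), (∀ s ∈ F, 0 ≤ w s) ∧ (∑ s ∈ F, w s) = 1 ∧
      ∀ f : Bdd S, φ f = ∑ s ∈ F, w s * f.1 s}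

/-- `𝔸_n`: finitely supported probability measures concentrated on `𝕋_n`. -/
def Asets (n : ℕ) : Set (Bdd 𝕋 → ℝ) :=
  {φ | ∃ (F : Finset 𝕋) (w : 𝕋 → ℝ), (∀ t ∈ F, cnt t = n) ∧ (∀ t ∈ F, 0 ≤ w t) ∧
      (∑ t ∈ F, w t) = 1 ∧ ∀ f : Bdd 𝕋, φ f = ∑ t ∈ F, w t * f.1 t}

/-- The extension of `+` on `ℕ` to ultrafilters: `A ∈ U+V` iff
`{m : {n : m+n ∈ A} ∈ V} ∈ U`. -/
noncomputable def addU (U V : Ultrafilter ℕ) : Ultrafilter ℕ :=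
  U.bind fun m => V.map fun n => m + n

/-- `𝔸_U`: the `U`-limit of the sets `𝔸_m`. -/
def AU (U : Ultrafilter ℕ) : Set (Bdd 𝕋 → ℝ) :=
  {μ | μ ∈ PrSet 𝕋 ∧ ∀ W : Set (Bdd 𝕋 → ℝ), IsOpen W → μ ∈ W →
      {m : ℕ | (W ∩ Asets m).Nonempty} ∈ U}

/-- The extension of `ˆ` to ultrafilters on `𝕋`: `E ∈ UˆV` iff
`{u : {v : uˆv ∈ E} ∈ V} ∈ U`. -/
noncomputable def umul (U V : Ultrafilter 𝕋) : Ultrafilter 𝕋 :=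
  U.bind fun u => V.map fun v => u * v

/-- Substitution of measures into a term `t`:
`t(μ_0,…,μ_{m-1})(f)` is the nested integral
`μ_0(x_0 ↦ ⋯ μ_{m-1}(x_{m-1} ↦ f(t(x⃗)))⋯)`. -/
noncomputable def substM : 𝕋 → List (Bdd 𝕋 → ℝ) → (Bdd 𝕋 → ℝ)
  | FreeMagma.of _, μs => μs.headI
  | FreeMagma.mul a b, μs =>
      hmul (substM a (μs.take (cnt a))) (substM b (μs.drop (cnt a)))

/-- `t_k`: iteratively remove the carets of `t` involving only leaves of index
greater than `k`. -/
def tk : 𝕋 → ℕ → 𝕋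
  | FreeMagma.of _, _ => e1
  | FreeMagma.mul a b, k => if k < cnt a then tk a k * e1 else a * tk b (k - cnt a)

/-- `l_k(t) = #(t_k) - 2` (truncated subtraction). -/
def lk (t : 𝕋) (k : ℕ) : ℕ := cnt (tk t k) - 2

/-- The subterm `t/σ` of `t` at address `σ` (`false` = left/`0`, `true` = right/`1`). -/
def subT : 𝕋 → List Bool → Option 𝕋
  | t, [] => some t
  | FreeMagma.of _, _ :: _ => none
  | FreeMagma.mul a b, c :: σ => if c then subT b σ else subT a σ

/-- `σ <_lex ς` for incompatible binary sequences: at the first coordinate where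
they differ, `σ` has `0` and `ς` has `1`. -/
def lexLT (σ ς : List Bool) : Prop :=
  ∃ p σ' ς', σ = p ++ (false :: σ') ∧ ς = p ++ (true :: ς')

/-- `x₀·E`. -/
def x0E (E : Set 𝕋) : Set 𝕋 :=
  {x | ∃ a b c : 𝕋, x = a * (b * c) ∧ (a * b) * c ∈ E}

/-- `x₁·E`. -/
def x1E (E : Set 𝕋) : Set 𝕋 :=
  {x | ∃ s a b c : 𝕋, x = s * (a * (b * c)) ∧ s * ((a * b) * c) ∈ E}

/-- `u_σ` for a nonempty finite binary sequence `σ`. -/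
def uSeq : List Bool → 𝕋
  | [] => e1
  | [_] => e1
  | b :: σ => if b then e1 * uSeq σ else uSeq σ * e1

/-- `a ≪ b`: for some `p`, `#(a) < 2^p` and `2^p` divides `#(b)`. -/
def ll (a b : 𝕋) : Prop := ∃ p : ℕ, cnt a < 2 ^ p ∧ 2 ^ p ∣ cnt b

/-- `r↾n`: the first `n` values of `r` as a finite binary sequence. -/
def rList (r : ℕ → Bool) (n : ℕ) : List Bool := (List.range n).map r

/-- The map `h_r : 𝕋 → 𝕋`. -/
noncomputable def hr (r : ℕ → Bool) : 𝕋 → 𝕋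
  | FreeMagma.of _ => uSeq (rList r 1)
  | FreeMagma.mul a b =>
      if ll a b then hr r a * hr r b else uSeq (rList r (cnt a + cnt b))

/-- The action of `h_r` on measures: `h_r(μ)(f) = μ(f ∘ h_r)`. -/
noncomputable def hrM (r : ℕ → Bool) (φ : Bdd 𝕋 → ℝ) : Bdd 𝕋 → ℝ :=
  fun f => φ (liftBdd fun t => f.1 (hr r t))

/-- `lev`: `l(1) = 0`, `l(aˆb) = l(a) + 1`. -/
def lev : 𝕋 → ℕ
  | FreeMagma.of _ => 0
  | FreeMagma.mul a _ => lev a + 1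

/-- `C` is closed under `ˆ`. -/
def HClosed (C : Set (Bdd 𝕋 → ℝ)) : Prop := ∀ μ ∈ C, ∀ ν ∈ C, hmul μ ν ∈ C

/-! Since `U + U = U`, it suffices to find, for `U`-many `m` and then `U`-many `n`, an element
of `𝔸_m ˆ 𝔸_n ⊆ 𝔸_{m+n}` in a given neighbourhood of `μˆν`. Right translation `χ ↦ χˆν` is
weak* continuous, which yields `μ' ∈ 𝔸_m` with `μ'ˆν` in the neighbourhood; left translation by a
finitely supported `μ'` is weak* continuous on bounded functionals, which then yields `ν' ∈ 𝔸_n`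
with `μ'ˆν'` in it. -/

open Filter Topology Finset

section UltraLimit

variable {X : Type*} [TopologicalSpace X]

def ultraLimSet (U : Ultrafilter ℕ) (A : ℕ → Set X) : Set X :=
  {x | ∀ W ∈ 𝓝 x, ∀ᶠ m in (U : Filter ℕ), (W ∩ A m).Nonempty}

theorem eventually_addU {U V : Ultrafilter ℕ} {p : ℕ → Prop} :
    (∀ᶠ k in (addU U V : Filter ℕ), p k) ↔ ∀ᶠ m in (U : Filter ℕ), ∀ᶠ n in (V : Filter ℕ), p (m + n) :=
  Iff.rfl

theorem mem_ultraLimSet_of_op {U : Ultrafilter ℕ} (hU : addU U U = U) {A : ℕ → Set X}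
    {op : X → X → X} (hA : ∀ m n, ∀ a ∈ A m, ∀ b ∈ A n, op a b ∈ A (m + n)) {x y : X}
    (hx : x ∈ ultraLimSet U A) (hy : y ∈ ultraLimSet U A) (hleft : ContinuousAt (op · y) x)
    (hright : ∀ m, ∀ a ∈ A m, ContinuousWithinAt (op a) (⋃ n, A n) y) :
    op x y ∈ ultraLimSet U A := by
  intro W hW
  -- an open `W'` is also a neighbourhood of the nearby points `op a y`
  obtain ⟨W', hW'W, hW'open, hxyW'⟩ := mem_nhds_iff.mp hW
  rw [← hU, eventually_addU]
  filter_upwards [hx _ (hleft (hW'open.mem_nhds hxyW'))] with m ⟨a, hayW', haA⟩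
  obtain ⟨V, hV, hVW'⟩ := mem_nhdsWithin_iff_exists_mem_nhds_inter.mp
    ((hright m a haA).preimage_mem_nhdsWithin (hW'open.mem_nhds hayW'))
  filter_upwards [hy V hV] with n ⟨b, hbV, hbA⟩
  exact ⟨op a b, hW'W (hVW' ⟨hbV, Set.mem_iUnion.mpr ⟨n, hbA⟩⟩), hA m n a haA b hbA⟩

end UltraLimit

theorem AU_eq (U : Ultrafilter ℕ) : AU U = PrSet 𝕋 ∩ ultraLimSet U Asets := by
  ext μ
  refine and_congr_right fun _ => ⟨fun h W hW => ?_, fun h W hW hμW => h W (hW.mem_nhds hμW)⟩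
  obtain ⟨W', hW'W, hW'open, hμW'⟩ := mem_nhds_iff.mp hW
  exact mem_of_superset (h W' hW'open hμW') fun m ⟨φ, hφW', hφA⟩ => ⟨φ, hW'W hφW', hφA⟩

section Functionals

variable {S : Type*}

theorem Bdd.ext {f g : Bdd S} (h : f.1 = g.1) : f = g := Subtype.ext h

theorem liftBdd_val {g : S → ℝ} (h : ∃ M, ∀ s, |g s| ≤ M) : (liftBdd g).1 = g := by
  rw [liftBdd]
  exact congrArg Subtype.val (dif_pos h)

theorem liftBdd_comp_apply {T : Type*} (f : Bdd S) (g : T → S) (t : T) :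
    (liftBdd fun t => f.1 (g t)).1 t = f.1 (g t) := by
  obtain ⟨M, hM⟩ := f.2
  rw [liftBdd_val ⟨M, fun t => hM (g t)⟩]

def NormLeOne (φ : Bdd S → ℝ) : Prop :=
  ∀ (f : Bdd S) (M : ℝ), (∀ s, |f.1 s| ≤ M) → |φ f| ≤ M

theorem normLeOne_of_eq_sum {φ : Bdd S → ℝ} {F : Finset S} {w : S → ℝ}
    (hw0 : ∀ s ∈ F, 0 ≤ w s) (hw1 : ∑ s ∈ F, w s = 1)
    (hφ : ∀ f : Bdd S, φ f = ∑ s ∈ F, w s * f.1 s) : NormLeOne φ := by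
  intro f M hM
  rw [hφ]
  calc |∑ s ∈ F, w s * f.1 s| ≤ ∑ s ∈ F, |w s * f.1 s| := abs_sum_le_sum_abs _ _
    _ ≤ ∑ s ∈ F, w s * M := sum_le_sum fun s hs => by
        rw [abs_mul, abs_of_nonneg (hw0 s hs)]
        exact mul_le_mul_of_nonneg_left (hM s) (hw0 s hs)
    _ = M := by rw [← sum_mul, hw1, one_mul]

namespace PrSet

variable {φ : Bdd S → ℝ}

theorem map_const (hφ : φ ∈ PrSet S) (c : ℝ) : φ (constB S c) = c := by
  rw [hφ.2.1 c (constB S 1) (constB S c) fun _ => (mul_one c).symm, hφ.2.2.2, mul_one]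

theorem mono (hφ : φ ∈ PrSet S) {f g : Bdd S} (h : ∀ s, f.1 s ≤ g.1 s) : φ f ≤ φ g := by
  obtain ⟨M, hM⟩ := f.2
  obtain ⟨N, hN⟩ := g.2
  have hd := liftBdd_val (g := fun s => g.1 s - f.1 s)
    ⟨N + M, fun s => (abs_sub _ _).trans (add_le_add (hN s) (hM s))⟩
  have hsplit := hφ.1 f _ g fun s => by rw [hd]; ring
  have hpos := hφ.2.2.1 _ fun s => by rw [hd]; exact sub_nonneg.mpr (h s)
  linarith

theorem normLeOne (hφ : φ ∈ PrSet S) : NormLeOne φ := fun _ M hM =>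
  abs_le.mpr ⟨(map_const hφ (-M)).symm.le.trans (mono hφ fun s => (abs_le.mp (hM s)).1),
    (mono hφ (g := constB S M) fun s => (abs_le.mp (hM s)).2).trans (map_const hφ M).le⟩

end PrSet

variable (op : S → S → S)

/-- This is the junk value `0` of `liftBdd` unless `x ↦ ψ(y ↦ f(x ⋆ y))` is bounded, which
`NormLeOne ψ` guarantees. -/
noncomputable def sectionIntegral (ψ : Bdd S → ℝ) (f : Bdd S) : Bdd S :=
  liftBdd fun x => ψ (liftBdd fun y => f.1 (op x y))

theorem starM_apply (φ ψ : Bdd S → ℝ) (f : Bdd S) :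
    starM op φ ψ f = φ (sectionIntegral op ψ f) := rfl

theorem sectionIntegral_apply {ψ : Bdd S → ℝ} (hψ : NormLeOne ψ) (f : Bdd S) (x : S) :
    (sectionIntegral op ψ f).1 x = ψ (liftBdd fun y => f.1 (op x y)) := by
  obtain ⟨M, hM⟩ := f.2
  refine congrFun (liftBdd_val ⟨M, fun x => hψ _ M fun y => ?_⟩) x
  rw [liftBdd_comp_apply]
  exact hM _

theorem starM_mem_PrSet {φ ψ : Bdd S → ℝ} (hφ : φ ∈ PrSet S) (hψ : ψ ∈ PrSet S) :
    starM op φ ψ ∈ PrSet S := by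
  have hψb := PrSet.normLeOne hψ
  obtain ⟨hφadd, hφsmul, hφpos, hφone⟩ := hφ
  obtain ⟨hψadd, hψsmul, hψpos, hψone⟩ := hψ
  refine ⟨fun f g h hfgh => hφadd (sectionIntegral op ψ f) (sectionIntegral op ψ g)
      (sectionIntegral op ψ h) fun x => ?_,
    fun c f g hfg => hφsmul c (sectionIntegral op ψ f) (sectionIntegral op ψ g) fun x => ?_,
    fun f hf => hφpos (sectionIntegral op ψ f) fun x => ?_, ?_⟩
  · simp only [sectionIntegral_apply op hψb]
    exact hψadd _ _ _ fun y => by simp only [liftBdd_comp_apply]; exact hfgh _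
  · simp only [sectionIntegral_apply op hψb]
    exact hψsmul c _ _ fun y => by simp only [liftBdd_comp_apply]; exact hfg _
  · simp only [sectionIntegral_apply op hψb]
    exact hψpos _ fun y => by simp only [liftBdd_comp_apply]; exact hf _
  · have hconst : sectionIntegral op ψ (constB S 1) = constB S 1 := Bdd.ext <| funext fun x => by
      rw [sectionIntegral_apply op hψb]
      exact (congrArg ψ (Bdd.ext <| funext fun y => liftBdd_comp_apply _ _ y)).trans hψone
    rw [starM_apply, hconst, hφone]

variable {φ : Bdd S → ℝ} {F : Finset S} {w : S → ℝ}

theorem starM_eq_sum (hφ : ∀ f : Bdd S, φ f = ∑ x ∈ F, w x * f.1 x) {ψ : Bdd S → ℝ}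
    (hψ : NormLeOne ψ) (f : Bdd S) :
    starM op φ ψ f = ∑ x ∈ F, w x * ψ (liftBdd fun y => f.1 (op x y)) := by
  simp only [starM_apply, hφ, sectionIntegral_apply op hψ]

theorem continuous_starM_left (ψ : Bdd S → ℝ) : Continuous fun φ => starM op φ ψ :=
  continuous_pi fun _ => continuous_apply _

theorem continuousOn_starM_right_of_eq_sum (hφ : ∀ f : Bdd S, φ f = ∑ x ∈ F, w x * f.1 x) :
    ContinuousOn (starM op φ) {ψ | NormLeOne ψ} := by
  have hsum : Continuous fun (ψ : Bdd S → ℝ) (f : Bdd S) =>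
      ∑ x ∈ F, w x * ψ (liftBdd fun y => f.1 (op x y)) :=
    continuous_pi fun _ => continuous_finsetSum _ fun _ _ => continuous_const.mul (continuous_apply _)
  exact hsum.continuousOn.congr fun ψ hψ => funext (starM_eq_sum op hφ hψ)

theorem starM_eq_sum_product (hφ : ∀ f : Bdd S, φ f = ∑ x ∈ F, w x * f.1 x) {ψ : Bdd S → ℝ}
    {G : Finset S} {u : S → ℝ} (hψ : ∀ f : Bdd S, ψ f = ∑ y ∈ G, u y * f.1 y)
    (hψb : NormLeOne ψ) (f : Bdd S) :
    starM op φ ψ f = ∑ p ∈ F ×ˢ G, w p.1 * u p.2 * f.1 (op p.1 p.2) := by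
  rw [starM_eq_sum op hφ hψb, sum_product]
  refine sum_congr rfl fun x _ => ?_
  rw [hψ, mul_sum]
  refine sum_congr rfl fun y _ => ?_
  rw [liftBdd_comp_apply]
  ring

end Functionals

theorem exists_weights_image {ι S : Type*} (s : Finset ι) (v : ι → ℝ) (hv : ∀ i ∈ s, 0 ≤ v i)
    (g : ι → S) : ∃ w : S → ℝ, (∀ t ∈ s.image g, 0 ≤ w t) ∧
      ∀ c : S → ℝ, ∑ t ∈ s.image g, w t * c t = ∑ i ∈ s, v i * c (g i) := by
  refine ⟨fun t => ∑ i ∈ s with g i = t, v i,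
    fun t _ => sum_nonneg fun i hi => hv i (mem_filter.mp hi).1, fun c => sum_image' _ fun i _ => ?_⟩
  rw [sum_mul]
  exact sum_congr rfl fun j hj => by rw [(mem_filter.mp hj).2]

theorem normLeOne_of_mem_Asets {n : ℕ} {φ : Bdd 𝕋 → ℝ} (hφ : φ ∈ Asets n) : NormLeOne φ := by
  obtain ⟨F, w, -, hw0, hw1, hφ⟩ := hφ
  exact normLeOne_of_eq_sum hw0 hw1 hφ

theorem hmul_mem_Asets {m n : ℕ} {φ ψ : Bdd 𝕋 → ℝ} (hφ : φ ∈ Asets m) (hψ : ψ ∈ Asets n) :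
    hmul φ ψ ∈ Asets (m + n) := by
  have hψb := normLeOne_of_mem_Asets hψ
  obtain ⟨F, v, hFcnt, hv0, hv1, hφ⟩ := hφ
  obtain ⟨G, u, hGcnt, hu0, hu1, hψ⟩ := hψ
  obtain ⟨w, hw0, hw⟩ := exists_weights_image (F ×ˢ G) (fun p => v p.1 * u p.2)
    (fun p hp => mul_nonneg (hv0 _ (mem_product.mp hp).1) (hu0 _ (mem_product.mp hp).2))
    fun p => p.1 * p.2
  refine ⟨_, w, ?_, hw0, ?_, fun f => ?_⟩
  · simp only [mem_image, mem_product]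
    rintro _ ⟨⟨a, b⟩, ⟨ha, hb⟩, rfl⟩
    show cnt a + cnt b = m + n
    rw [hFcnt a ha, hGcnt b hb]
  · simpa [sum_product, ← sum_mul_sum, hv1, hu1] using hw 1
  · rw [hw, hmul, starM_eq_sum_product _ hφ hψ hψb]

/-- `𝔸_U` is closed under `ˆ`. -/
theorem AU_closed_under_hmul (U : Ultrafilter ℕ) (hU : addU U U = U)
    (μ ν : Bdd 𝕋 → ℝ) (hμ : μ ∈ AU U) (hν : ν ∈ AU U) :
    hmul μ ν ∈ AU U := by
  rw [AU_eq] at hμ hν ⊢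
  refine ⟨starM_mem_PrSet _ hμ.1 hν.1, mem_ultraLimSet_of_op hU (fun _ _ _ ha _ hb =>
    hmul_mem_Asets ha hb) hμ.2 hν.2 (continuous_starM_left _ ν).continuousAt fun m φ hφ => ?_⟩
  obtain ⟨F, w, -, -, -, hφ⟩ := hφ
  exact ((continuousOn_starM_right_of_eq_sum _ hφ).continuousWithinAt (PrSet.normLeOne hν.1)).mono
    (Set.iUnion_subset fun _ _ hψ => normLeOne_of_mem_Asets hψ)
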